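/- For every nonzero vector ψ ∈ ℝ³ with magnitude ψ = ‖ψ‖, the tangent operator T(ψ) = (sin ψ/ψ) I + (1/ψ²)(1 − sin ψ/ψ) (ψ ⊗ ψ) + ((1 − cos ψ)/ψ²) ψ̂ satisfies T(ψ) = exp(ψ̂) T(ψ)ᵀ (equivalently, the left and right tangent operators of the rotation exponential are intertwined by the rotation exp(ψ̂) itself). -/

import Mathlib

open Matrix Real
open scoped Nat

/-- The hat (cross-product) operator: `hat v *ᵥ h = v ×₃ h`. -/
def hat (v : Fin 3 → ℝ) : Matrix (Fin 3) (Fin 3) ℝ :=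
  !![0, -v 2, v 1; v 2, 0, -v 0; -v 1, v 0, 0]

/-- Euclidean norm of a vector in ℝ³. -/
noncomputable def norm3 (v : Fin 3 → ℝ) : ℝ := ‖(WithLp.equiv 2 (Fin 3 → ℝ)).symm v‖

/-- The tangent operator `T(ψ)` of the rotation vector parametrisation (Eq. 15). -/
noncomputable def tangentOp (ψ : Fin 3 → ℝ) : Matrix (Fin 3) (Fin 3) ℝ :=
  (Real.sin (norm3 ψ) / norm3 ψ) • (1 : Matrix (Fin 3) (Fin 3) ℝ)
    + ((1 / (norm3 ψ) ^ 2) * (1 - Real.sin (norm3 ψ) / norm3 ψ)) • Matrix.vecMulVec ψ ψ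
    + ((1 - Real.cos (norm3 ψ)) / (norm3 ψ) ^ 2) • hat ψ

lemma norm3_sq (ψ : Fin 3 → ℝ) : norm3 ψ ^ 2 = ψ 0 ^ 2 + ψ 1 ^ 2 + ψ 2 ^ 2 := by
  rw [norm3, EuclideanSpace.norm_eq, Real.sq_sqrt (by positivity)]
  simp [Fin.sum_univ_three, sq_abs]

lemma norm3_ne_zero {ψ : Fin 3 → ℝ} (hψ : ψ ≠ 0) : norm3 ψ ≠ 0 := by
  simp only [norm3, ne_eq, norm_eq_zero]
  intro h
  apply hψ
  have := (WithLp.equiv 2 (Fin 3 → ℝ)).symm.injective (a₂ := 0) (by simpa using h)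
  simpa using this

lemma hat_transpose (ψ : Fin 3 → ℝ) : (hat ψ)ᵀ = -hat ψ := by
  ext i j
  fin_cases i <;> fin_cases j <;> simp [hat]

lemma vecMulVec_transpose' (ψ : Fin 3 → ℝ) :
    (Matrix.vecMulVec ψ ψ)ᵀ = Matrix.vecMulVec ψ ψ := by
  ext i j
  simp [Matrix.vecMulVec_apply, mul_comm]

lemma hat_mul_hat (ψ : Fin 3 → ℝ) :
    hat ψ * hat ψ = Matrix.vecMulVec ψ ψ - (norm3 ψ ^ 2) • 1 := by
  rw [norm3_sq]
  ext i j
  fin_cases i <;> fin_cases j <;>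
    simp [hat, Matrix.mul_apply, Matrix.vecMulVec_apply, Fin.sum_univ_three,
      Matrix.one_apply] <;> ring

lemma hat_mul_vecMulVec (ψ : Fin 3 → ℝ) :
    hat ψ * Matrix.vecMulVec ψ ψ = 0 := by
  ext i j
  fin_cases i <;> fin_cases j <;>
    simp [hat, Matrix.mul_apply, Matrix.vecMulVec_apply, Fin.sum_univ_three] <;> ring

lemma vecMulVec_mul_hat (ψ : Fin 3 → ℝ) :
    Matrix.vecMulVec ψ ψ * hat ψ = 0 := by
  ext i j
  fin_cases i <;> fin_cases j <;>
    simp [hat, Matrix.mul_apply, Matrix.vecMulVec_apply, Fin.sum_univ_three] <;> ring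

lemma vecMulVec_mul_vecMulVec (ψ : Fin 3 → ℝ) :
    Matrix.vecMulVec ψ ψ * Matrix.vecMulVec ψ ψ = (norm3 ψ ^ 2) • Matrix.vecMulVec ψ ψ := by
  rw [norm3_sq]
  ext i j
  fin_cases i <;> fin_cases j <;>
    simp [Matrix.mul_apply, Matrix.vecMulVec_apply, Fin.sum_univ_three] <;> ring

lemma hat_cube (ψ : Fin 3 → ℝ) :
    hat ψ * (hat ψ * hat ψ) = (-(norm3 ψ ^ 2)) • hat ψ := by
  rw [hat_mul_hat, Matrix.mul_sub, hat_mul_vecMulVec, Matrix.mul_smul, Matrix.mul_one,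
    zero_sub, neg_smul]

lemma hat_pow_odd (ψ : Fin 3 → ℝ) (k : ℕ) :
    hat ψ ^ (2 * k + 1) = ((-(norm3 ψ ^ 2)) ^ k) • hat ψ := by
  induction k with
  | zero => simp
  | succ k ih =>
    have : 2 * (k + 1) + 1 = (2 * k + 1) + 2 := by ring
    rw [this, pow_add, ih, Matrix.smul_mul, pow_two (hat ψ), hat_cube, smul_smul, ← pow_succ]

lemma hat_pow_even (ψ : Fin 3 → ℝ) (k : ℕ) :
    hat ψ ^ (2 * k + 2) = ((-(norm3 ψ ^ 2)) ^ k) • (hat ψ * hat ψ) := by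
  have : 2 * k + 2 = (2 * k + 1) + 1 := by ring
  rw [this, pow_succ, hat_pow_odd, Matrix.smul_mul]

lemma exp_hat (ψ : Fin 3 → ℝ) (hψ : ψ ≠ 0) :
    NormedSpace.exp (hat ψ) =
      (1 + ((1 - Real.cos (norm3 ψ)) / norm3 ψ ^ 2) • (hat ψ * hat ψ))
        + (Real.sin (norm3 ψ) / norm3 ψ) • hat ψ := by
  set t := norm3 ψ with ht
  have htne : t ≠ 0 := norm3_ne_zero hψ
  have ht2 : t ^ 2 ≠ 0 := pow_ne_zero _ htne
  rw [NormedSpace.exp_eq_tsum (𝕂 := ℝ)]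
  refine HasSum.tsum_eq ?_
  refine HasSum.even_add_odd ?_ ?_
  · -- even part
    have hc : HasSum (fun n : ℕ => (-1 : ℝ) ^ n * t ^ (2 * n) / (2 * n)!) (Real.cos t) :=
      Real.hasSum_cos t
    have hc1 := (hasSum_nat_add_iff' (f := fun n : ℕ => (-1 : ℝ) ^ n * t ^ (2 * n) / (2 * n)!)
      1).mpr hc
    simp only [Finset.range_one, Finset.sum_singleton, pow_zero, one_mul, Nat.mul_zero,
      Nat.factorial_zero, Nat.cast_one, div_one] at hc1
    -- hc1 : HasSum (fun n => (-1)^(n+1) * t^(2*(n+1)) / (2*(n+1))!) (cos t - 1)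
    have hc2 := ((hc1.neg).div_const (t ^ 2)).smul_const (hat ψ * hat ψ)
    have key : HasSum (fun k : ℕ => (((2 * (k + 1))! : ℝ)⁻¹) • hat ψ ^ (2 * (k + 1)))
        (((1 - Real.cos t) / t ^ 2) • (hat ψ * hat ψ)) := by
      convert hc2 using 2 with k
      · have h2 : 2 * (k + 1) = 2 * k + 2 := by ring
        rw [h2, hat_pow_even, smul_smul]
        congr 1
        have h1 : (-(t ^ 2)) ^ k = (-1 : ℝ) ^ k * t ^ (2 * k) := by
          rw [neg_pow, pow_mul]
        rw [h1]
        have hf : ((2 * k + 2)! : ℝ) ≠ 0 := by positivity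
        field_simp
        ring
      · ring
    have := (hasSum_nat_add_iff (f := fun n : ℕ => (((2 * n)! : ℝ)⁻¹) • hat ψ ^ (2 * n)) 1).mp key
    simpa [add_comm] using this
  · -- odd part
    have hs : HasSum (fun n : ℕ => (-1 : ℝ) ^ n * t ^ (2 * n + 1) / (2 * n + 1)!) (Real.sin t) :=
      Real.hasSum_sin t
    have hs2 := (hs.div_const t).smul_const (hat ψ)
    convert hs2 using 2 with k
    · rfl
    rw [hat_pow_odd, smul_smul]
    congr 1
    have h1 : (-(t ^ 2)) ^ k = (-1 : ℝ) ^ k * t ^ (2 * k) := by rw [neg_pow, pow_mul]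
    rw [h1]
    have hf : ((2 * k + 1)! : ℝ) ≠ 0 := by positivity
    field_simp
    ring

/-- The left and right tangent operators are intertwined by the rotation itself:
`T(ψ) = exp(ψ̂) T(ψ)ᵀ`. -/
theorem tangentOp_exp_intertwine (ψ : Fin 3 → ℝ) (hψ : ψ ≠ 0) :
    tangentOp ψ = NormedSpace.exp (hat ψ) * (tangentOp ψ)ᵀ := by
  have htne : norm3 ψ ≠ 0 := norm3_ne_zero hψ
  have ht2 : norm3 ψ ^ 2 ≠ 0 := pow_ne_zero _ htne
  rw [exp_hat ψ hψ, tangentOp]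
  simp only [transpose_add, transpose_smul, transpose_one, hat_transpose, vecMulVec_transpose',
    smul_neg]
  rw [hat_mul_hat]
  set t := norm3 ψ with ht
  set P := Matrix.vecMulVec ψ ψ with hP
  set A := hat ψ with hA
  simp only [add_mul, mul_add, Matrix.smul_mul, Matrix.mul_smul, Matrix.one_mul, Matrix.mul_one,
    mul_neg, Matrix.sub_mul, Matrix.mul_sub, hat_mul_vecMulVec ψ, vecMulVec_mul_hat ψ,
    _root_.vecMulVec_mul_vecMulVec ψ, hat_mul_hat ψ, hP, hA, ← ht, smul_zero, smul_smul, smul_sub,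
    smul_add, neg_zero, add_zero, zero_add, sub_zero]
  have hsc : Real.sin t ^ 2 + Real.cos t ^ 2 = 1 := Real.sin_sq_add_cos_sq t
  match_scalars
  all_goals field_simp
  all_goals try ring1
  all_goals try linear_combination (-(t ^ 4)) * hsc
  all_goals linear_combination (-1 : ℝ) * hsc
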